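/- (Output error bound for pH-OpInf-DEIM.) Under the setting of the state error bound — Φ ∈ ℝⁿˣʳ with ΦᵀΦ = I_r; H(x) = (1/2)xᵀQx + cᵀh(x) with Q symmetric, ∇H(x) = Qx + J_h(x)ᵀc, and ∇H and J_h Lipschitz with constants C_Lip[∇H], C_Lip[J_h]; Ψ ∈ ℝᵈˣᵐ⁰ with orthonormal columns, P a selection matrix with PᵀΨ invertible, ℙ = Ψ(PᵀΨ)⁻¹Pᵀ; Q_r = ΦᵀQΦ, B_r ∈ ℝʳˣᵐ — let x: [0,T] → ℝⁿ and y: [0,T] → ℝᵐ be continuous, let x_r: [0,T] → ℝʳ be continuous, and set y_r(t) := B_rᵀ(Q_r x_r(t) + Φᵀ J_h(Φ x_r(t))ᵀ ℙᵀ c). Define C₄ := ‖B_rᵀΦᵀ‖·C_Lip[∇H], C₅ := ‖B_r‖·‖c‖, C₆ := ‖B_rᵀΦᵀ‖·(‖Q‖ + C_Lip[J_h]·‖(PᵀΨ)⁻¹‖·‖c‖), and C := 4·max{1, C₄², C₅², C₆²}. Then ∫₀ᵀ ‖y(t) − y_r(t)‖² dt ≤ C·( ∫₀ᵀ ‖x(t)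 − Φx_r(t)‖² dt + ∫₀ᵀ ‖y(t) − B_rᵀΦᵀ∇H(x(t))‖² dt + ∫₀ᵀ ‖(I − ℙ)J_h(ΦΦᵀx(t))Φ‖² dt ). -/

import Mathlib

open Matrix MeasureTheory RealInnerProductSpace

noncomputable section

/-- Euclidean space `ℝⁿ`. -/
abbrev Evec (n : ℕ) := EuclideanSpace ℝ (Fin n)

/-- Matrix-vector product on Euclidean spaces. -/
def mv {a b : ℕ} (M : Matrix (Fin a) (Fin b) ℝ) (v : Evec b) : Evec a := WithLp.toLp 2 (M.mulVec v)

/-- Spectral (operator) norm of a real matrix, viewed as a linear map between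
Euclidean spaces. -/
def spec {a b : ℕ} (M : Matrix (Fin a) (Fin b) ℝ) : ℝ :=
  ‖LinearMap.toContinuousLinearMap (Matrix.toEuclideanLin M)‖

/-!
Split the output error at the projected state `z = ΦΦᵀx`. Comparing `y_r` with `B_rᵀΦᵀ∇H(z)`,
`y − y_r` is the optimization residual `y − B_rᵀΦᵀ∇H(x)`, plus a term Lipschitz in `x − z`, plus
the hyper-reduction term `B_rᵀ((I − ℙ)J_h(z)Φ)ᵀc`, plus a term Lipschitz in `Φᵀx − x_r`; in the
last one `‖ℙ‖ ≤ ‖(PᵀΨ)⁻¹‖`, as `Ψ` and `P` have orthonormal columns. Squaring with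
`(a + b + c + d)² ≤ 4(a² + b² + c² + d²)` and Pythagoras, `‖x − Φx_r‖² = ‖x − z‖² + ‖Φᵀx − x_r‖²`,
gives a pointwise bound, which is integrated over `[0, T]`.
-/

open scoped Matrix.Norms.L2Operator

lemma spec_eq_l2_opNorm {a b : ℕ} (M : Matrix (Fin a) (Fin b) ℝ) : spec M = ‖M‖ := rfl

section MatrixVector

variable {a b c : ℕ}

@[simp]
lemma mv_mv (M : Matrix (Fin a) (Fin b) ℝ) (N : Matrix (Fin b) (Fin c) ℝ) (v : Evec c) :
    mv M (mv N v) = mv (M * N) v := by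
  simp [mv, Matrix.mulVec_mulVec]

@[simp]
lemma mv_add (M : Matrix (Fin a) (Fin b) ℝ) (u v : Evec b) : mv M (u + v) = mv M u + mv M v := by
  simp [mv, Matrix.mulVec_add]

@[simp]
lemma mv_sub (M : Matrix (Fin a) (Fin b) ℝ) (u v : Evec b) : mv M (u - v) = mv M u - mv M v := by
  simp [mv, Matrix.mulVec_sub]

@[simp]
lemma sub_mv (M N : Matrix (Fin a) (Fin b) ℝ) (v : Evec b) : mv (M - N) v = mv M v - mv N v := by
  simp [mv, Matrix.sub_mulVec]

@[simp]
lemma one_mv (v : Evec a) : mv 1 v = v := by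
  simp [mv]

lemma norm_mv_le (M : Matrix (Fin a) (Fin b) ℝ) (v : Evec b) : ‖mv M v‖ ≤ ‖M‖ * ‖v‖ :=
  M.l2_opNorm_mulVec v

lemma l2_opNorm_transpose (M : Matrix (Fin a) (Fin b) ℝ) : ‖Mᵀ‖ = ‖M‖ :=
  M.l2_opNorm_conjTranspose

lemma inner_mv_transpose (M : Matrix (Fin a) (Fin b) ℝ) (u : Evec a) (v : Evec b) :
    ⟪mv Mᵀ u, v⟫ = ⟪u, mv M v⟫ := by
  simp [mv, EuclideanSpace.inner_eq_star_dotProduct, Matrix.dotProduct_mulVec,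
    Matrix.vecMul_transpose]

@[fun_prop]
lemma Continuous.mv {X : Type*} [TopologicalSpace X] {M : X → Matrix (Fin a) (Fin b) ℝ}
    {v : X → Evec b} (hM : Continuous M) (hv : Continuous v) :
    Continuous fun x => _root_.mv (M x) (v x) :=
  (PiLp.continuous_toLp 2 _).comp (hM.matrix_mulVec ((PiLp.continuous_ofLp 2 _).comp hv))

end MatrixVector

section OrthonormalColumns

variable {n r : ℕ} {Φ : Matrix (Fin n) (Fin r) ℝ}

lemma norm_mv_of_transpose_mul_self (hΦ : Φᵀ * Φ = 1) (v : Evec r) : ‖mv Φ v‖ = ‖v‖ := by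
  have hsq : ‖mv Φ v‖ ^ 2 = ‖v‖ ^ 2 := by
    rw [← real_inner_self_eq_norm_sq, ← real_inner_self_eq_norm_sq, ← inner_mv_transpose, mv_mv,
      hΦ, one_mv]
  exact (sq_eq_sq₀ (norm_nonneg _) (norm_nonneg _)).1 hsq

lemma l2_opNorm_le_one_of_transpose_mul_self (hΦ : Φᵀ * Φ = 1) : ‖Φ‖ ≤ 1 :=
  ContinuousLinearMap.opNorm_le_bound _ zero_le_one fun v => by
    rw [one_mul]
    exact (norm_mv_of_transpose_mul_self hΦ v).le

lemma norm_sub_mv_sq_eq (hΦ : Φᵀ * Φ = 1) (u : Evec n) (v : Evec r) :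
    ‖u - mv Φ v‖ ^ 2 = ‖u - mv Φ (mv Φᵀ u)‖ ^ 2 + ‖mv Φᵀ u - v‖ ^ 2 := by
  have horth : ⟪u - mv Φ (mv Φᵀ u), mv Φ (mv Φᵀ u - v)⟫ = 0 := by
    rw [← inner_mv_transpose]
    simp [hΦ, ← Matrix.mul_assoc]
  have hsplit : u - mv Φ v = (u - mv Φ (mv Φᵀ u)) + mv Φ (mv Φᵀ u - v) := by
    simp
  rw [hsplit, norm_add_sq_real, horth, norm_mv_of_transpose_mul_self hΦ]
  ring

end OrthonormalColumns

section OperatorNormBounds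

variable {a b c : ℕ} {A : Matrix (Fin a) (Fin b) ℝ} {B : Matrix (Fin b) (Fin c) ℝ}

lemma l2_opNorm_mul_le_left_of_le_one (hB : ‖B‖ ≤ 1) : ‖A * B‖ ≤ ‖A‖ :=
  (l2_opNorm_mul A B).trans (mul_le_of_le_one_right (norm_nonneg A) hB)

lemma l2_opNorm_mul_le_right_of_le_one (hA : ‖A‖ ≤ 1) : ‖A * B‖ ≤ ‖B‖ :=
  (l2_opNorm_mul A B).trans (mul_le_of_le_one_left (norm_nonneg B) hA)

end OperatorNormBounds

lemma l2_opNorm_mul_mul_transpose_le {a b d e : ℕ} {Ψ : Matrix (Fin d) (Fin a) ℝ}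
    {P : Matrix (Fin e) (Fin b) ℝ} (hΨ : Ψᵀ * Ψ = 1) (hP : Pᵀ * P = 1)
    (M : Matrix (Fin a) (Fin b) ℝ) :
    ‖Ψ * M * Pᵀ‖ ≤ ‖M‖ := by
  have hPt : ‖Pᵀ‖ ≤ 1 := by
    rw [l2_opNorm_transpose]; exact l2_opNorm_le_one_of_transpose_mul_self hP
  exact (l2_opNorm_mul_le_left_of_le_one hPt).trans
    (l2_opNorm_mul_le_right_of_le_one (l2_opNorm_le_one_of_transpose_mul_self hΨ))

lemma transpose_mul_self_of_selection {d m₀ : ℕ} {P : Matrix (Fin d) (Fin m₀) ℝ}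
    (hP : ∃ ℘ : Fin m₀ → Fin d, Function.Injective ℘ ∧ ∀ i j, P i j = if i = ℘ j then 1 else 0) :
    Pᵀ * P = 1 := by
  obtain ⟨℘, h℘, hP⟩ := hP
  ext j k
  simp [Matrix.mul_apply, Matrix.one_apply, hP, h℘.eq_iff, eq_comm]

lemma add_sq_le_four_mul {a b c d : ℝ} :
    (a + b + c + d) ^ 2 ≤ 4 * (a ^ 2 + b ^ 2 + c ^ 2 + d ^ 2) := by
  nlinarith [sq_nonneg (a - b), sq_nonneg (a - c), sq_nonneg (a - d), sq_nonneg (b - c),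
    sq_nonneg (b - d), sq_nonneg (c - d)]

lemma norm_sq_le_of_eq_add_add_add {E : Type*} [SeminormedAddCommGroup E] {e t₁ t₂ t₃ t₄ : E}
    {α β γ K₂ K₃ K₄ : ℝ} (he : e = t₁ + t₂ + t₃ + t₄) (h₂ : ‖t₂‖ ≤ K₂ * α) (h₃ : ‖t₃‖ ≤ K₃ * β)
    (h₄ : ‖t₄‖ ≤ K₄ * γ) :
    ‖e‖ ^ 2 ≤ 4 * max (max 1 (K₂ ^ 2)) (max (K₃ ^ 2) (K₄ ^ 2)) *
      (‖t₁‖ ^ 2 + α ^ 2 + β ^ 2 + γ ^ 2) := by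
  set M := max (max 1 (K₂ ^ 2)) (max (K₃ ^ 2) (K₄ ^ 2))
  have sq_le {t : E} {K x : ℝ} (ht : ‖t‖ ≤ K * x) (hK : K ^ 2 ≤ M) : ‖t‖ ^ 2 ≤ M * x ^ 2 :=
    (pow_le_pow_left₀ (norm_nonneg t) ht 2).trans
      (by rw [mul_pow]; exact mul_le_mul_of_nonneg_right hK (sq_nonneg x))
  have hnorm : ‖e‖ ≤ ‖t₁‖ + ‖t₂‖ + ‖t₃‖ + ‖t₄‖ := he ▸ norm_add₄_le
  calc ‖e‖ ^ 2 ≤ (‖t₁‖ + ‖t₂‖ + ‖t₃‖ + ‖t₄‖) ^ 2 := pow_le_pow_left₀ (norm_nonneg e) hnorm 2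
    _ ≤ 4 * (‖t₁‖ ^ 2 + ‖t₂‖ ^ 2 + ‖t₃‖ ^ 2 + ‖t₄‖ ^ 2) := add_sq_le_four_mul
    _ ≤ 4 * (M * ‖t₁‖ ^ 2 + M * α ^ 2 + M * β ^ 2 + M * γ ^ 2) := by
        gcongr
        · exact le_mul_of_one_le_left (sq_nonneg _) (by simp [M])
        · exact sq_le h₂ (by simp [M])
        · exact sq_le h₃ (by simp [M])
        · exact sq_le h₄ (by simp [M])
    _ = 4 * M * (‖t₁‖ ^ 2 + α ^ 2 + β ^ 2 + γ ^ 2) := by ring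

lemma continuous_of_norm_sub_le {E F : Type*} [SeminormedAddCommGroup E]
    [SeminormedAddCommGroup F] {f : E → F} {K : ℝ} (hf : ∀ a b, ‖f a - f b‖ ≤ K * ‖a - b‖) :
    Continuous f :=
  (LipschitzWith.of_dist_le' (K := K) (by simpa only [dist_eq_norm] using hf)).continuous

lemma intervalIntegral_le_mul_add_add {T C : ℝ} (hT : 0 ≤ T) {f g₁ g₂ g₃ : ℝ → ℝ}
    (hf : ContinuousOn f (Set.Icc 0 T)) (hg₁ : ContinuousOn g₁ (Set.Icc 0 T))
    (hg₂ : ContinuousOn g₂ (Set.Icc 0 T)) (hg₃ : ContinuousOn g₃ (Set.Icc 0 T))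
    (hle : ∀ t, f t ≤ C * (g₁ t + g₂ t + g₃ t)) :
    ∫ t in (0 : ℝ)..T, f t ≤
      C * ((∫ t in (0 : ℝ)..T, g₁ t) + (∫ t in (0 : ℝ)..T, g₂ t) + ∫ t in (0 : ℝ)..T, g₃ t) := by
  have hint {g : ℝ → ℝ} (hg : ContinuousOn g (Set.Icc 0 T)) : IntervalIntegrable g volume 0 T :=
    hg.intervalIntegrable_of_Icc hT
  rw [← intervalIntegral.integral_add (hint hg₁) (hint hg₂),
    ← intervalIntegral.integral_add ((hint hg₁).add (hint hg₂)) (hint hg₃),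
    ← intervalIntegral.integral_const_mul]
  exact intervalIntegral.integral_mono_on hT (hint hf)
    ((((hint hg₁).add (hint hg₂)).add (hint hg₃)).const_mul C) fun t _ => hle t

section ReducedOutput

variable {n r d m : ℕ} {Φ : Matrix (Fin n) (Fin r) ℝ} {Q : Matrix (Fin n) (Fin n) ℝ} {c : Evec d}
  {Jh : Evec n → Matrix (Fin d) (Fin n) ℝ} {gH : Evec n → Evec n}

lemma reduced_output_error_eq (hgH : ∀ p, gH p = mv Q p + mv (Jh p)ᵀ c)
    (Pbb : Matrix (Fin d) (Fin d) ℝ) (Br : Matrix (Fin r) (Fin m) ℝ) (u : Evec n) (s v : Evec r)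
    (Y : Evec m) :
    Y - mv Brᵀ (mv (Φᵀ * Q * Φ) v + mv Φᵀ (mv (Jh (mv Φ v))ᵀ (mv Pbbᵀ c))) =
      (Y - mv Brᵀ (mv Φᵀ (gH u))) + mv (Brᵀ * Φᵀ) (gH u - gH (mv Φ s)) +
        mv (Brᵀ * ((1 - Pbb) * Jh (mv Φ s) * Φ)ᵀ) c +
        mv (Brᵀ * Φᵀ) (mv (Q * Φ) (s - v) + mv (Jh (mv Φ s) - Jh (mv Φ v))ᵀ (mv Pbbᵀ c)) := by
  simp only [hgH, mv_mv, mv_add, mv_sub, sub_mv, Matrix.transpose_mul, Matrix.transpose_sub,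
    Matrix.mul_sub, Matrix.sub_mul, Matrix.one_mul, Matrix.mul_assoc]
  abel

variable {CLipH CLipJ : ℝ}

lemma norm_reduced_output_error_sq_le (hΦ : Φᵀ * Φ = 1)
    (hgH : ∀ p, gH p = mv Q p + mv (Jh p)ᵀ c)
    (hLipH : ∀ a b, ‖gH a - gH b‖ ≤ CLipH * ‖a - b‖)
    (hLipJ : ∀ a b, ‖Jh a - Jh b‖ ≤ CLipJ * ‖a - b‖)
    {Pbb : Matrix (Fin d) (Fin d) ℝ} {K : ℝ} (hPbb : ‖Pbb‖ ≤ K) (Br : Matrix (Fin r) (Fin m) ℝ)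
    {C₄ C₅ C₆ : ℝ} (hC₄ : C₄ = ‖Brᵀ * Φᵀ‖ * CLipH) (hC₅ : C₅ = ‖Br‖ * ‖c‖)
    (hC₆ : C₆ = ‖Brᵀ * Φᵀ‖ * (‖Q‖ + CLipJ * K * ‖c‖)) (u : Evec n) (v : Evec r) (Y : Evec m) :
    ‖Y - mv Brᵀ (mv (Φᵀ * Q * Φ) v + mv Φᵀ (mv (Jh (mv Φ v))ᵀ (mv Pbbᵀ c)))‖ ^ 2 ≤
      4 * max (max 1 (C₄ ^ 2)) (max (C₅ ^ 2) (C₆ ^ 2)) *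
        (‖u - mv Φ v‖ ^ 2 + ‖Y - mv Brᵀ (mv Φᵀ (gH u))‖ ^ 2 +
          ‖(1 - Pbb) * Jh (mv Φ (mv Φᵀ u)) * Φ‖ ^ 2) := by
  set s := mv Φᵀ u
  set w := s - v
  have hΦ₁ := l2_opNorm_le_one_of_transpose_mul_self hΦ
  have hΔJ : ‖Jh (mv Φ s) - Jh (mv Φ v)‖ ≤ CLipJ * ‖w‖ := by
    simpa [w, ← mv_sub, norm_mv_of_transpose_mul_self hΦ] using hLipJ (mv Φ s) (mv Φ v)
  refine (norm_sq_le_of_eq_add_add_add (K₂ := C₄) (K₃ := C₅) (K₄ := C₆)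
    (α := ‖u - mv Φ s‖) (β := ‖(1 - Pbb) * Jh (mv Φ s) * Φ‖) (γ := ‖w‖)
    (reduced_output_error_eq hgH Pbb Br u s v Y) ?_ ?_ ?_).trans (le_of_eq ?_)
  · calc _ ≤ ‖Brᵀ * Φᵀ‖ * ‖gH u - gH (mv Φ s)‖ := norm_mv_le _ _
      _ ≤ ‖Brᵀ * Φᵀ‖ * (CLipH * ‖u - mv Φ s‖) := by gcongr; exact hLipH _ _
      _ = C₄ * ‖u - mv Φ (mv Φᵀ u)‖ := by rw [hC₄]; ring
  · calc _ ≤ ‖Brᵀ * ((1 - Pbb) * Jh (mv Φ s) * Φ)ᵀ‖ * ‖c‖ := norm_mv_le _ _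
      _ ≤ ‖Brᵀ‖ * ‖((1 - Pbb) * Jh (mv Φ s) * Φ)ᵀ‖ * ‖c‖ := by gcongr; exact l2_opNorm_mul _ _
      _ = C₅ * ‖(1 - Pbb) * Jh (mv Φ (mv Φᵀ u)) * Φ‖ := by
        rw [hC₅, l2_opNorm_transpose, l2_opNorm_transpose]; ring
  · have hQΦ : ‖mv (Q * Φ) w‖ ≤ ‖Q‖ * ‖w‖ :=
      (norm_mv_le _ _).trans (by gcongr; exact l2_opNorm_mul_le_left_of_le_one hΦ₁)
    have hJP : ‖mv (Jh (mv Φ s) - Jh (mv Φ v))ᵀ (mv Pbbᵀ c)‖ ≤ CLipJ * ‖w‖ * (K * ‖c‖) := by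
      refine (norm_mv_le _ _).trans (mul_le_mul ?_ ?_ (norm_nonneg _) ((norm_nonneg _).trans hΔJ))
      · rwa [l2_opNorm_transpose]
      · exact (norm_mv_le _ _).trans (by rw [l2_opNorm_transpose]; gcongr)
    calc _ ≤ ‖Brᵀ * Φᵀ‖ * ‖mv (Q * Φ) w + mv (Jh (mv Φ s) - Jh (mv Φ v))ᵀ (mv Pbbᵀ c)‖ :=
          norm_mv_le _ _
      _ ≤ ‖Brᵀ * Φᵀ‖ * (‖Q‖ * ‖w‖ + CLipJ * ‖w‖ * (K * ‖c‖)) := by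
          gcongr; exact (norm_add_le _ _).trans (add_le_add hQΦ hJP)
      _ = C₆ * ‖w‖ := by rw [hC₆]; ring
  · rw [norm_sub_mv_sq_eq hΦ u v]
    ring

end ReducedOutput

theorem output_error_bound_pH_OpInf_DEIM_general {n r d m m0 : ℕ}
    (T : ℝ) (hT : 0 < T)
    (Φ : Matrix (Fin n) (Fin r) ℝ) (hΦ : Φᵀ * Φ = 1)
    (Q : Matrix (Fin n) (Fin n) ℝ) (c : Evec d)
    (Jh : Evec n → Matrix (Fin d) (Fin n) ℝ)
    (gH : Evec n → Evec n) (hgH : ∀ p, gH p = mv Q p + mv (Jh p)ᵀ c)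
    (CLipH : ℝ) (hLipH : ∀ a b : Evec n, ‖gH a - gH b‖ ≤ CLipH * ‖a - b‖)
    (CLipJ : ℝ) (hLipJ : ∀ a b : Evec n, spec (Jh a - Jh b) ≤ CLipJ * ‖a - b‖)
    (Ψ P : Matrix (Fin d) (Fin m0) ℝ)
    (hΨ : Ψᵀ * Ψ = 1)
    (hP : ∃ ℘ : Fin m0 → Fin d, Function.Injective ℘ ∧
      ∀ i j, P i j = if i = ℘ j then 1 else 0)
    (Pbb : Matrix (Fin d) (Fin d) ℝ) (hPbb : Pbb = Ψ * (Pᵀ * Ψ)⁻¹ * Pᵀ)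
    (Qr : Matrix (Fin r) (Fin r) ℝ) (hQrdef : Qr = Φᵀ * Q * Φ)
    (Br : Matrix (Fin r) (Fin m) ℝ)
    (x : ℝ → Evec n) (hx : ContinuousOn x (Set.Icc (0 : ℝ) T))
    (y : ℝ → Evec m) (hy : ContinuousOn y (Set.Icc (0 : ℝ) T))
    (xr : ℝ → Evec r) (hxr : ContinuousOn xr (Set.Icc (0 : ℝ) T))
    (yr : ℝ → Evec m)
    (hyr : ∀ t, yr t = mv Brᵀ (mv Qr (xr t) + mv Φᵀ (mv (Jh (mv Φ (xr t)))ᵀ (mv Pbbᵀ c))))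
    (C₄ C₅ C₆ C : ℝ)
    (hC₄ : C₄ = spec (Brᵀ * Φᵀ) * CLipH)
    (hC₅ : C₅ = spec Br * ‖c‖)
    (hC₆ : C₆ = spec (Brᵀ * Φᵀ) * (spec Q + CLipJ * spec ((Pᵀ * Ψ)⁻¹) * ‖c‖))
    (hC : C = 4 * max (max 1 (C₄ ^ 2)) (max (C₅ ^ 2) (C₆ ^ 2))) :
    ∫ t in (0 : ℝ)..T, ‖y t - yr t‖ ^ 2 ≤
      C * ((∫ t in (0 : ℝ)..T, ‖x t - mv Φ (xr t)‖ ^ 2)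
        + (∫ t in (0 : ℝ)..T, ‖y t - mv Brᵀ (mv Φᵀ (gH (x t)))‖ ^ 2)
        + (∫ t in (0 : ℝ)..T,
            (spec ((1 - Pbb) * Jh (mv Φ (mv Φᵀ (x t))) * Φ)) ^ 2)) := by
  have hPbb_le : ‖Pbb‖ ≤ ‖(Pᵀ * Ψ)⁻¹‖ :=
    hPbb ▸ l2_opNorm_mul_mul_transpose_le hΨ (transpose_mul_self_of_selection hP) _
  have hJh : Continuous Jh := continuous_of_norm_sub_le hLipJ
  have hgH_cont : Continuous gH := continuous_of_norm_sub_le hLipH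
  subst hC hQrdef
  simp only [spec_eq_l2_opNorm] at hC₄ hC₅ hC₆ ⊢
  refine intervalIntegral_le_mul_add_add hT.le ?_ (by fun_prop) (by fun_prop) (by fun_prop)
    fun t => hyr t ▸ norm_reduced_output_error_sq_le hΦ hgH hLipH hLipJ hPbb_le Br hC₄ hC₅ hC₆
      (x t) (xr t) (y t)
  rw [funext hyr]
  fun_prop

/-- Output error bound for the pH-OpInf-DEIM reduced-order
model: with `y_r(t) = B_rᵀ(Q_r x_r(t) + Φᵀ J_h(Φ x_r(t))ᵀ ℙᵀ c)`, the squared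
`L²` output error is bounded by `C = 4·max{1, C₄², C₅², C₆²}` times the sum of
the state approximation, optimization and hyper-reduction errors. -/
theorem output_error_bound_pH_OpInf_DEIM {n r d m m0 : ℕ}
    (T : ℝ) (hT : 0 < T)
    (Φ : Matrix (Fin n) (Fin r) ℝ) (hΦ : Φᵀ * Φ = 1)
    (Q : Matrix (Fin n) (Fin n) ℝ) (hQ : Qᵀ = Q) (c : Evec d)
    (h : Evec n → Evec d) (Jh : Evec n → Matrix (Fin d) (Fin n) ℝ)
    (hJac : ∀ p, HasFDerivAt h
      (LinearMap.toContinuousLinearMap (Matrix.toEuclideanLin (Jh p))) p)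
    (gH : Evec n → Evec n) (hgH : ∀ p, gH p = mv Q p + mv (Jh p)ᵀ c)
    (CLipH : ℝ) (hLipH : ∀ a b : Evec n, ‖gH a - gH b‖ ≤ CLipH * ‖a - b‖)
    (CLipJ : ℝ) (hLipJ : ∀ a b : Evec n, spec (Jh a - Jh b) ≤ CLipJ * ‖a - b‖)
    (Ψ P : Matrix (Fin d) (Fin m0) ℝ)
    (hΨ : Ψᵀ * Ψ = 1)
    (hP : ∃ ℘ : Fin m0 → Fin d, Function.Injective ℘ ∧
      ∀ i j, P i j = if i = ℘ j then 1 else 0)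
    (hPΨ : IsUnit (Pᵀ * Ψ))
    (Pbb : Matrix (Fin d) (Fin d) ℝ) (hPbb : Pbb = Ψ * (Pᵀ * Ψ)⁻¹ * Pᵀ)
    (Qr : Matrix (Fin r) (Fin r) ℝ) (hQrdef : Qr = Φᵀ * Q * Φ)
    (Br : Matrix (Fin r) (Fin m) ℝ)
    (x : ℝ → Evec n) (hx : ContinuousOn x (Set.Icc (0 : ℝ) T))
    (y : ℝ → Evec m) (hy : ContinuousOn y (Set.Icc (0 : ℝ) T))
    (xr : ℝ → Evec r) (hxr : ContinuousOn xr (Set.Icc (0 : ℝ) T))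
    (yr : ℝ → Evec m)
    (hyr : ∀ t, yr t = mv Brᵀ (mv Qr (xr t) + mv Φᵀ (mv (Jh (mv Φ (xr t)))ᵀ (mv Pbbᵀ c))))
    (C₄ C₅ C₆ C : ℝ)
    (hC₄ : C₄ = spec (Brᵀ * Φᵀ) * CLipH)
    (hC₅ : C₅ = spec Br * ‖c‖)
    (hC₆ : C₆ = spec (Brᵀ * Φᵀ) * (spec Q + CLipJ * spec ((Pᵀ * Ψ)⁻¹) * ‖c‖))
    (hC : C = 4 * max (max 1 (C₄ ^ 2)) (max (C₅ ^ 2) (C₆ ^ 2))) :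
    ∫ t in (0 : ℝ)..T, ‖y t - yr t‖ ^ 2 ≤
      C * ((∫ t in (0 : ℝ)..T, ‖x t - mv Φ (xr t)‖ ^ 2)
        + (∫ t in (0 : ℝ)..T, ‖y t - mv Brᵀ (mv Φᵀ (gH (x t)))‖ ^ 2)
        + (∫ t in (0 : ℝ)..T,
            (spec ((1 - Pbb) * Jh (mv Φ (mv Φᵀ (x t))) * Φ)) ^ 2)) :=
  output_error_bound_pH_OpInf_DEIM_general T hT Φ hΦ Q c Jh gH hgH CLipH hLipH CLipJ hLipJ Ψ P hΨ hP
    Pbb hPbb Qr hQrdef Br x hx y hy xr hxr yr hyr C₄ C₅ C₆ C hC₄ hC₅ hC₆ hC
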